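/- arXiv:2302.13144 — 5 statements merged into one kernel-verified Lean document; each statement's English description precedes it below -/
import Mathlib

section
/- Let A be a real n×n matrix, B a real n×m matrix, Q and R symmetric positive definite, and let P* be a symmetric positive definite solution of the algebraic Riccati equation P* = Q + AᵀP*A − AᵀP*B(R + BᵀP*B)⁻¹BᵀP*A, and let K* = (R + BᵀP*B)⁻¹BᵀP*A. Then the closed-loop matrix A − BK* satisfies ‖A − BK*‖_{P*} < 1; in particular, its spectral radius satisfies ρ(A − BK*) < 1, i.e., the optimal LQR policy is stabilizing. -/
open Matrix Finset

/-- Spectral norm of a real matrix: the operator norm with respect to the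
Euclidean norms on the domain and codomain. -/
noncomputable def specNorm {p q : ℕ} (M : Matrix (Fin p) (Fin q) ℝ) : ℝ :=
  ‖LinearMap.toContinuousLinearMap (Matrix.toEuclideanLin M)‖

/-- Spectral radius of a real square matrix: the largest modulus of a
(complex) eigenvalue. -/
noncomputable def specRad {p : ℕ} (M : Matrix (Fin p) (Fin p) ℝ) : ℝ :=
  sSup {r : ℝ | ∃ μ ∈ spectrum ℂ (M.map (algebraMap ℝ ℂ)), r = ‖μ‖}

/-- Smallest (real) eigenvalue of a square matrix. -/
noncomputable def lambdaMin {p : ℕ} (S : Matrix (Fin p) (Fin p) ℝ) : ℝ :=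
  sInf {r : ℝ | ∃ v : Fin p → ℝ, v ≠ 0 ∧ S.mulVec v = r • v}

/-- `W`-induced norm of `M`: `sup_{z ≠ 0} √((zᵀMᵀWMz)/(zᵀWz))`. -/
noncomputable def winducedNorm {p : ℕ} (W M : Matrix (Fin p) (Fin p) ℝ) : ℝ :=
  sSup {r : ℝ | ∃ z : Fin p → ℝ, z ≠ 0 ∧
    r = Real.sqrt ((z ⬝ᵥ (Mᵀ * W * M).mulVec z) / (z ⬝ᵥ W.mulVec z))}

/-- `W`-relative bound of a symmetric matrix `X`: `sup_{z ≠ 0} (zᵀXz)/(zᵀWz)`. -/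
noncomputable def wrelBound {p : ℕ} (W X : Matrix (Fin p) (Fin p) ℝ) : ℝ :=
  sSup {r : ℝ | ∃ z : Fin p → ℝ, z ≠ 0 ∧
    r = (z ⬝ᵥ X.mulVec z) / (z ⬝ᵥ W.mulVec z)}

/-- Frobenius norm of a real matrix. -/
noncomputable def frobNorm {p q : ℕ} (M : Matrix (Fin p) (Fin q) ℝ) : ℝ :=
  Real.sqrt (∑ i, ∑ j, (M i j) ^ 2)

/-!
The Riccati equation turns into the Lyapunov identity `LᵀP*L = P* - (Q + K*ᵀRK*)` for the closed
loop `L = A - BK*`. As `Q + K*ᵀRK*` is positive definite it dominates `c P*` for some `c > 0`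
(compactness of the unit sphere), so `zᵀLᵀP*Lz ≤ (1 - c) zᵀP*z` and `‖L‖_{P*} ≤ √(1 - c) < 1`.
For an eigenvalue `μ` with eigenvector `a + ib`, `L` acts on the real pair `(a, b)` as
multiplication by `μ`, so the same inequality applied to `a` and `b` gives `|μ|² ≤ 1 - c`.
-/

namespace Matrix

variable {n : Type*} [Fintype n]

theorem lyapunov_eq_of_riccati {α m : Type*} [CommRing α] [Fintype m] [DecidableEq m]
    (A : Matrix n n α) (B : Matrix n m α) (Q P : Matrix n n α) (R : Matrix m m α)
    (K : Matrix m n α) (hS : IsUnit (R + Bᵀ * P * B))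
    (hARE : P = Q + Aᵀ * P * A - Aᵀ * P * B * (R + Bᵀ * P * B)⁻¹ * (Bᵀ * P * A))
    (hK : K = (R + Bᵀ * P * B)⁻¹ * (Bᵀ * P * A)) :
    (A - B * K)ᵀ * P * (A - B * K) = P - (Q + Kᵀ * R * K) := by
  have hSK : (R + Bᵀ * P * B) * K = Bᵀ * P * A := by
    rw [hK, mul_nonsing_inv_cancel_left _ _ ((isUnit_iff_isUnit_det _).mp hS)]
  have hPBK : Aᵀ * P * B * K = Aᵀ * P * B * (R + Bᵀ * P * B)⁻¹ * (Bᵀ * P * A) := by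
    rw [hK, Matrix.mul_assoc _ (R + Bᵀ * P * B)⁻¹]
  have hKSK : Kᵀ * R * K + Kᵀ * Bᵀ * P * B * K = Kᵀ * (Bᵀ * P * A) := by
    rw [← hSK]; simp only [Matrix.mul_add, Matrix.add_mul, Matrix.mul_assoc]
  conv_rhs => rw [hARE]
  rw [← hPBK, transpose_sub, transpose_mul]
  simp only [Matrix.sub_mul, Matrix.mul_sub, Matrix.mul_assoc] at hKSK ⊢
  rw [← hKSK]
  abel

theorem smul_dotProduct_mulVec_smul (M : Matrix n n ℝ) (t : ℝ) (z : n → ℝ) :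
    (t • z) ⬝ᵥ M *ᵥ (t • z) = t ^ 2 * (z ⬝ᵥ M *ᵥ z) := by
  rw [mulVec_smul, dotProduct_smul, smul_dotProduct, smul_eq_mul, smul_eq_mul]; ring

theorem PosDef.exists_pos_mul_le {P X : Matrix n n ℝ} (hP : P.PosDef) (hX : X.PosDef) :
    ∃ c > 0, ∀ z, c * (z ⬝ᵥ P *ᵥ z) ≤ z ⬝ᵥ X *ᵥ z := by
  rcases isEmpty_or_nonempty n with _ | _
  · exact ⟨1, one_pos, fun z => by simp [Subsingleton.elim z 0]⟩
  set ratio : (n → ℝ) → ℝ := fun z => (z ⬝ᵥ X *ᵥ z) / (z ⬝ᵥ P *ᵥ z)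
  have hcont : ContinuousOn ratio (Metric.sphere 0 1) := by
    refine ContinuousOn.div (by fun_prop) (by fun_prop) fun z hz => ?_
    exact (hP.dotProduct_mulVec_pos (ne_zero_of_mem_unit_sphere ⟨z, hz⟩)).ne'
  obtain ⟨u, hu, hmin⟩ := (isCompact_sphere (0 : n → ℝ) 1).exists_isMinOn
    (NormedSpace.sphere_nonempty.mpr zero_le_one) hcont
  have hu0 : u ≠ 0 := ne_zero_of_mem_unit_sphere ⟨u, hu⟩
  refine ⟨ratio u, div_pos (hX.dotProduct_mulVec_pos hu0) (hP.dotProduct_mulVec_pos hu0),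
    fun z => ?_⟩
  rcases eq_or_ne z 0 with rfl | hz
  · simp
  have hnorm : ‖z‖ ≠ 0 := norm_ne_zero_iff.mpr hz
  -- the ratio is invariant under scaling, so its minimum on the sphere bounds it everywhere
  have hscale : ratio (‖z‖⁻¹ • z) = ratio z := by
    simp only [ratio, smul_dotProduct_mulVec_smul]
    exact mul_div_mul_left _ _ (pow_ne_zero 2 (inv_ne_zero hnorm))
  have hle : ratio u ≤ ratio z := hscale ▸ hmin (by simp [norm_smul, hnorm])
  exact (le_div_iff₀ (hP.dotProduct_mulVec_pos hz)).mp hle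

theorem dotProduct_transpose_mul_mul_mulVec {α : Type*} [CommSemiring α] (P L : Matrix n n α)
    (z : n → α) : z ⬝ᵥ (Lᵀ * P * L) *ᵥ z = (L *ᵥ z) ⬝ᵥ P *ᵥ (L *ᵥ z) := by
  rw [← mulVec_mulVec, ← mulVec_mulVec, dotProduct_mulVec, vecMul_transpose]

theorem dotProduct_mulVec_add_rotation (P : Matrix n n ℝ) (a b : n → ℝ) (x y : ℝ) :
    (x • a - y • b) ⬝ᵥ P *ᵥ (x • a - y • b) + (y • a + x • b) ⬝ᵥ P *ᵥ (y • a + x • b)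
      = (x ^ 2 + y ^ 2) * (a ⬝ᵥ P *ᵥ a + b ⬝ᵥ P *ᵥ b) := by
  simp only [mulVec_add, mulVec_sub, mulVec_smul, dotProduct_add, dotProduct_sub, add_dotProduct,
    sub_dotProduct, dotProduct_smul, smul_dotProduct, smul_eq_mul]
  ring

theorem exists_mulVec_eq_smul_of_mem_spectrum [DecidableEq n] {M : Matrix n n ℂ} {μ : ℂ}
    (hμ : μ ∈ spectrum ℂ M) : ∃ v ≠ 0, M *ᵥ v = μ • v := by
  rw [← spectrum_toLin', ← Module.End.hasEigenvalue_iff_mem_spectrum] at hμ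
  obtain ⟨v, hv⟩ := hμ.exists_hasEigenvector
  exact ⟨v, hv.2, hv.apply_eq_smul⟩

theorem normSq_le_of_dotProduct_mulVec_le [DecidableEq n] {P L : Matrix n n ℝ} {c : ℝ}
    (hP : P.PosDef) (h : ∀ z, z ⬝ᵥ (Lᵀ * P * L) *ᵥ z ≤ c * (z ⬝ᵥ P *ᵥ z)) {μ : ℂ}
    (hμ : μ ∈ spectrum ℂ (L.map (algebraMap ℝ ℂ))) : Complex.normSq μ ≤ c := by
  obtain ⟨v, hv0, hv⟩ := exists_mulVec_eq_smul_of_mem_spectrum hμ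
  set a : n → ℝ := fun i => (v i).re
  set b : n → ℝ := fun i => (v i).im
  have hLa : L *ᵥ a = μ.re • a - μ.im • b := by
    funext i
    simpa [mulVec, dotProduct, Complex.re_sum] using congrArg Complex.re (congrFun hv i)
  have hLb : L *ᵥ b = μ.im • a + μ.re • b := by
    funext i
    simpa [mulVec, dotProduct, Complex.im_sum, add_comm] using congrArg Complex.im (congrFun hv i)
  have hab : a ≠ 0 ∨ b ≠ 0 := by
    by_contra! hab
    exact hv0 (funext fun i => Complex.ext (congrFun hab.1 i) (congrFun hab.2 i))
  have hpos : 0 < a ⬝ᵥ P *ᵥ a + b ⬝ᵥ P *ᵥ b := by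
    rcases hab with ha | hb
    · exact add_pos_of_pos_of_nonneg (hP.dotProduct_mulVec_pos ha)
        (hP.posSemidef.dotProduct_mulVec_nonneg b)
    · exact add_pos_of_nonneg_of_pos (hP.posSemidef.dotProduct_mulVec_nonneg a)
        (hP.dotProduct_mulVec_pos hb)
  have hrot := dotProduct_mulVec_add_rotation P a b μ.re μ.im
  rw [← hLa, ← hLb, ← dotProduct_transpose_mul_mul_mulVec,
    ← dotProduct_transpose_mul_mul_mulVec] at hrot
  rw [Complex.normSq_apply, ← sq, ← sq]
  refine le_of_mul_le_mul_right ?_ hpos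
  linarith [h a, h b]

end Matrix

section

variable {p : ℕ} {P L : Matrix (Fin p) (Fin p) ℝ} {c : ℝ}

theorem winducedNorm_le_sqrt (hP : P.PosDef)
    (h : ∀ z, z ⬝ᵥ (Lᵀ * P * L) *ᵥ z ≤ c * (z ⬝ᵥ P *ᵥ z)) : winducedNorm P L ≤ √c := by
  refine Real.sSup_le ?_ (Real.sqrt_nonneg c)
  rintro r ⟨z, hz, rfl⟩
  exact Real.sqrt_le_sqrt ((div_le_iff₀ (hP.dotProduct_mulVec_pos hz)).mpr (h z))

theorem specRad_le_sqrt (hP : P.PosDef)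
    (h : ∀ z, z ⬝ᵥ (Lᵀ * P * L) *ᵥ z ≤ c * (z ⬝ᵥ P *ᵥ z)) : specRad L ≤ √c := by
  refine Real.sSup_le ?_ (Real.sqrt_nonneg c)
  rintro r ⟨μ, hμ, rfl⟩
  rw [Complex.norm_def]
  exact Real.sqrt_le_sqrt (normSq_le_of_dotProduct_mulVec_le hP h hμ)

end

/-- The optimal LQR closed loop `A - BK*` contracts in the
`P*`-induced norm, and in particular its spectral radius is below one, i.e.,
the optimal LQR policy is stabilizing. -/
theorem optimal_lqr_policy_stabilizing {n m : ℕ}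
    (A : Matrix (Fin n) (Fin n) ℝ) (B : Matrix (Fin n) (Fin m) ℝ)
    (Q Pstar : Matrix (Fin n) (Fin n) ℝ) (R : Matrix (Fin m) (Fin m) ℝ)
    (hQ : Q.PosDef) (hR : R.PosDef) (hPstar : Pstar.PosDef)
    (hARE : Pstar = Q + Aᵀ * Pstar * A
      - Aᵀ * Pstar * B * (R + Bᵀ * Pstar * B)⁻¹ * (Bᵀ * Pstar * A))
    (Kstar : Matrix (Fin m) (Fin n) ℝ)
    (hKstar : Kstar = (R + Bᵀ * Pstar * B)⁻¹ * (Bᵀ * Pstar * A)) :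
    winducedNorm Pstar (A - B * Kstar) < 1 ∧ specRad (A - B * Kstar) < 1 := by
  have hS : (R + Bᵀ * Pstar * B).PosDef := by
    simpa [conjTranspose_eq_transpose_of_trivial] using
      hR.add_posSemidef (hPstar.posSemidef.conjTranspose_mul_mul_same B)
  have hX : (Q + Kstarᵀ * R * Kstar).PosDef := by
    simpa [conjTranspose_eq_transpose_of_trivial] using
      hQ.add_posSemidef (hR.posSemidef.conjTranspose_mul_mul_same Kstar)
  have hLyap := lyapunov_eq_of_riccati A B Q Pstar R Kstar hS.isUnit hARE hKstar
  obtain ⟨c, hc, hcX⟩ := hPstar.exists_pos_mul_le hX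
  have hdecay : ∀ z, z ⬝ᵥ ((A - B * Kstar)ᵀ * Pstar * (A - B * Kstar)) *ᵥ z
      ≤ (1 - c) * (z ⬝ᵥ Pstar *ᵥ z) := fun z => by
    rw [hLyap, sub_mulVec, dotProduct_sub]
    linarith [hcX z]
  have hrate : √(1 - c) < 1 := (Real.sqrt_lt' one_pos).mpr (by linarith)
  exact ⟨(winducedNorm_le_sqrt hPstar hdecay).trans_lt hrate,
    (specRad_le_sqrt hPstar hdecay).trans_lt hrate⟩
end

section
/- Let A be a real n×n matrix, B a real n×m matrix, Q symmetric positive semidefinite, R symmetric positive definite, and let P* be a symmetric solution of the algebraic Riccati equation P* = Q + AᵀP*A − AᵀP*B(R + BᵀP*B)⁻¹BᵀP*A with P* positive semidefinite. Set R̃ := R + BᵀP*B and Ā := A − BR̃⁻¹BᵀP*A. Let P be a symmetric matrix with P̃ := P − P* ⪰ 0, and let P⁺ := Q + AᵀPA − AᵀPB(R + BᵀPB)⁻¹BᵀPA be its Riccati update. Then P⁺ − P* = ĀᵀP̃Ā − ĀᵀP̃B(R̃ + BᵀP̃B)⁻¹BᵀP̃Ā = ĀᵀP̃^{1/2}[ I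 + P̃^{1/2}BR̃⁻¹BᵀP̃^{1/2} ]⁻¹P̃^{1/2}Ā, where P̃^{1/2} is the unique positive semidefinite square root of P̃ (all the indicated inverses exist). -/
open Matrix Finset

/-! For every gain `K`, completing the square gives
`𝓡(P) + (K - K_P)ᵀ G_P (K - K_P) = Q + (A - BK)ᵀ P (A - BK) + Kᵀ R K`, where `𝓡` is the Riccati
update, `G_P = R + BᵀPB` and `K_P = G_P⁻¹ BᵀPA`. Taking `K = K_{P*}` for both `P` and `P*` and
subtracting cancels `Q` and `KᵀRK`: what remains is `ĀᵀP̃Ā` minus the square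
`(K_P - K_{P*})ᵀ G_P (K_P - K_{P*})`, and since `G_P (K_P - K_{P*}) = BᵀP̃Ā` that square is
`ĀᵀP̃B G_P⁻¹ BᵀP̃Ā`. As `G_P = R̃ + BᵀP̃B = R̃ + (BᵀP̃^{1/2})(P̃^{1/2}B)`, the Woodbury identity
`(1 + U R̃⁻¹ V)⁻¹ = 1 - U (R̃ + VU)⁻¹ V` with `U = P̃^{1/2}B`, `V = BᵀP̃^{1/2}` turns this into the
square-root form. -/

open scoped MatrixOrder

namespace Matrix

variable {ι κ 𝕜 : Type*} [Fintype κ] [DecidableEq κ] [CommRing 𝕜]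

theorem transpose_mul_mul_eq_of_mul_eq {G : Matrix κ κ 𝕜} {X Y : Matrix κ ι 𝕜}
    (hGsymm : G.IsSymm) (hG : IsUnit G) (h : G * Y = X) : Yᵀ * G * Y = Xᵀ * G⁻¹ * X := by
  have hdet := (isUnit_iff_isUnit_det G).mp hG
  obtain rfl : Y = G⁻¹ * X := by rw [← h, nonsing_inv_mul_cancel_left _ _ hdet]
  rw [transpose_mul, transpose_nonsing_inv, hGsymm.eq, Matrix.mul_assoc, Matrix.mul_assoc,
    mul_nonsing_inv_cancel_left _ _ hdet, Matrix.mul_assoc]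

theorem isUnit_one_add_mul_inv_mul [Fintype ι] [DecidableEq ι] {U : Matrix ι κ 𝕜}
    {V : Matrix κ ι 𝕜} {C : Matrix κ κ 𝕜} (hC : IsUnit C) (hCVU : IsUnit (C + V * U)) :
    IsUnit (1 + U * C⁻¹ * V) := by
  have hCdet := (isUnit_iff_isUnit_det C).mp hC
  have hfactor : 1 + C⁻¹ * V * U = C⁻¹ * (C + V * U) := by
    rw [Matrix.mul_add, nonsing_inv_mul _ hCdet, Matrix.mul_assoc]
  rw [isUnit_iff_isUnit_det, Matrix.mul_assoc, det_one_add_mul_comm, hfactor,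
    ← isUnit_iff_isUnit_det]
  exact (isUnit_nonsing_inv_iff.mpr hC).mul hCVU

theorem one_add_mul_inv_mul_inv [Fintype ι] [DecidableEq ι] {U : Matrix ι κ 𝕜}
    {V : Matrix κ ι 𝕜} {C : Matrix κ κ 𝕜} (hC : IsUnit C) (hCVU : IsUnit (C + V * U)) :
    (1 + U * C⁻¹ * V)⁻¹ = 1 - U * (C + V * U)⁻¹ * V := by
  have hCinv : C⁻¹⁻¹ = C := nonsing_inv_nonsing_inv _ ((isUnit_iff_isUnit_det C).mp hC)
  simpa [hCinv] using add_mul_mul_inv_eq_sub 1 U C⁻¹ V isUnit_one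
    (isUnit_nonsing_inv_iff.mpr hC) (by simpa [hCinv] using hCVU)

theorem IsSymm.transpose_mul_mul {ι κ α : Type*} [Fintype ι] [CommSemiring α]
    {P : Matrix ι ι α} (B : Matrix ι κ α) (hP : P.IsSymm) : (Bᵀ * P * B).IsSymm := by
  simp [IsSymm, transpose_mul, hP.eq, Matrix.mul_assoc]

theorem PosSemidef.eigenvectorUnitary_mul_diagonal_sqrt_mul_star {n : Type*} [Fintype n]
    [DecidableEq n] {A : Matrix n n ℝ} (hA : A.PosSemidef) :
    (hA.1.eigenvectorUnitary : Matrix n n ℝ) * diagonal ((↑) ∘ Real.sqrt ∘ hA.1.eigenvalues) *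
      (star hA.1.eigenvectorUnitary : Matrix n n ℝ) = CFC.sqrt A := by
  rw [CFC.sqrt_eq_cfc, cfc_nnreal_eq_real _ A, hA.1.cfc_eq, IsHermitian.cfc,
    Unitary.conjStarAlgAut_apply]
  congr! 3
  ext i
  simp [hA.eigenvalues_nonneg i]

end Matrix

section Riccati

variable {ι κ 𝕜 : Type*} [Fintype ι] [Fintype κ] [DecidableEq κ] [CommRing 𝕜]
  (A : Matrix ι ι 𝕜) (B : Matrix ι κ 𝕜) (Q : Matrix ι ι 𝕜) (R : Matrix κ κ 𝕜)

noncomputable def riccatiUpdate (P : Matrix ι ι 𝕜) : Matrix ι ι 𝕜 :=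
  Q + Aᵀ * P * A - Aᵀ * P * B * (R + Bᵀ * P * B)⁻¹ * (Bᵀ * P * A)

noncomputable def riccatiGain (P : Matrix ι ι 𝕜) : Matrix κ ι 𝕜 :=
  (R + Bᵀ * P * B)⁻¹ * (Bᵀ * P * A)

variable {A B Q R}

theorem mul_riccatiGain {P : Matrix ι ι 𝕜} (hG : IsUnit (R + Bᵀ * P * B)) :
    (R + Bᵀ * P * B) * riccatiGain A B R P = Bᵀ * P * A := by
  rw [riccatiGain, ← Matrix.mul_assoc,
    mul_nonsing_inv _ ((isUnit_iff_isUnit_det _).mp hG), Matrix.one_mul]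

theorem riccatiUpdate_eq {P : Matrix ι ι 𝕜} (hR : R.IsSymm) (hP : P.IsSymm)
    (hG : IsUnit (R + Bᵀ * P * B)) :
    riccatiUpdate A B Q R P = Q + Aᵀ * P * A
      - (riccatiGain A B R P)ᵀ * (R + Bᵀ * P * B) * riccatiGain A B R P := by
  rw [transpose_mul_mul_eq_of_mul_eq (hR.add (hP.transpose_mul_mul B)) hG (mul_riccatiGain hG),
    riccatiUpdate]
  simp [transpose_mul, hP.eq, Matrix.mul_assoc]

theorem riccatiUpdate_add_gain_sq {P : Matrix ι ι 𝕜} (hR : R.IsSymm) (hP : P.IsSymm)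
    (hG : IsUnit (R + Bᵀ * P * B)) (K : Matrix κ ι 𝕜) :
    riccatiUpdate A B Q R P
        + (K - riccatiGain A B R P)ᵀ * (R + Bᵀ * P * B) * (K - riccatiGain A B R P)
      = Q + (A - B * K)ᵀ * P * (A - B * K) + Kᵀ * R * K := by
  have hGsymm := (hR.add (hP.transpose_mul_mul B)).eq
  rw [riccatiUpdate_eq hR hP hG]
  set G := R + Bᵀ * P * B with hG_def
  set L := riccatiGain A B R P
  have hL : G * L = Bᵀ * P * A := mul_riccatiGain hG
  have hLt : Lᵀ * G = Aᵀ * P * B := by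
    simpa [transpose_mul, hGsymm, hP.eq, Matrix.mul_assoc] using congrArg transpose hL
  calc _ = Q + Aᵀ * P * A - Lᵀ * G * K - Kᵀ * (G * L) + Kᵀ * G * K := by
        simp only [transpose_sub, Matrix.sub_mul, Matrix.mul_sub, Matrix.mul_assoc]
        abel
    _ = _ := by
        rw [hLt, hL, hG_def]
        simp only [transpose_sub, transpose_mul, Matrix.sub_mul, Matrix.mul_sub, Matrix.add_mul,
          Matrix.mul_add, Matrix.mul_assoc]
        abel

theorem riccatiUpdate_sub_riccatiUpdate {P₁ P₂ : Matrix ι ι 𝕜} (hR : R.IsSymm) (hP₁ : P₁.IsSymm)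
    (hP₂ : P₂.IsSymm) (hG₁ : IsUnit (R + Bᵀ * P₁ * B)) (hG₂ : IsUnit (R + Bᵀ * P₂ * B)) :
    riccatiUpdate A B Q R P₁ - riccatiUpdate A B Q R P₂
      = (A - B * riccatiGain A B R P₂)ᵀ * (P₁ - P₂) * (A - B * riccatiGain A B R P₂)
        - (A - B * riccatiGain A B R P₂)ᵀ * (P₁ - P₂) * B * (R + Bᵀ * P₁ * B)⁻¹
          * (Bᵀ * (P₁ - P₂) * (A - B * riccatiGain A B R P₂)) := by
  set L₂ := riccatiGain A B R P₂
  have h₁ := riccatiUpdate_add_gain_sq (A := A) (Q := Q) hR hP₁ hG₁ L₂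
  have h₂ := riccatiUpdate_add_gain_sq (A := A) (Q := Q) hR hP₂ hG₂ L₂
  rw [sub_self, transpose_zero, Matrix.zero_mul, Matrix.zero_mul, add_zero] at h₂
  have hgap : (R + Bᵀ * P₁ * B) * (riccatiGain A B R P₁ - L₂)
      = Bᵀ * (P₁ - P₂) * (A - B * L₂) := by
    have hsplit : R + Bᵀ * P₁ * B = R + Bᵀ * P₂ * B + Bᵀ * (P₁ - P₂) * B := by
      simp only [Matrix.mul_sub, Matrix.sub_mul]
      abel
    rw [Matrix.mul_sub, mul_riccatiGain hG₁, hsplit, Matrix.add_mul, mul_riccatiGain hG₂]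
    simp only [Matrix.mul_sub, Matrix.sub_mul, Matrix.mul_assoc]
    abel
  have hsq := transpose_mul_mul_eq_of_mul_eq (hR.add (hP₁.transpose_mul_mul B)) hG₁ hgap
  rw [← neg_sub, transpose_neg, Matrix.neg_mul, Matrix.neg_mul, Matrix.mul_neg, neg_neg, hsq] at h₁
  set Abar := A - B * L₂
  have hdiff : Abarᵀ * (P₁ - P₂) * Abar = Abarᵀ * P₁ * Abar - Abarᵀ * P₂ * Abar := by
    rw [Matrix.mul_sub Abarᵀ P₁ P₂, Matrix.sub_mul]
  have hcross : (Bᵀ * (P₁ - P₂) * Abar)ᵀ = Abarᵀ * (P₁ - P₂) * B := by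
    rw [transpose_mul, transpose_mul, transpose_transpose, (hP₁.sub hP₂).eq, Matrix.mul_assoc]
  rw [eq_sub_of_add_eq h₁, h₂, hdiff, hcross]
  abel

end Riccati

theorem riccati_update_error_formula_general {n m : ℕ}
    (A : Matrix (Fin n) (Fin n) ℝ) (B : Matrix (Fin n) (Fin m) ℝ)
    (Q Pstar P : Matrix (Fin n) (Fin n) ℝ) (R : Matrix (Fin m) (Fin m) ℝ)
    (hR : R.PosDef) (hPstar : Pstar.PosSemidef)
    (hARE : Pstar = Q + Aᵀ * Pstar * A
      - Aᵀ * Pstar * B * (R + Bᵀ * Pstar * B)⁻¹ * (Bᵀ * Pstar * A))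
    (hPt : (P - Pstar).PosSemidef) :
    letI Rt := R + Bᵀ * Pstar * B
    letI Abar := A - B * Rt⁻¹ * (Bᵀ * Pstar * A)
    letI Pplus := Q + Aᵀ * P * A - Aᵀ * P * B * (R + Bᵀ * P * B)⁻¹ * (Bᵀ * P * A)
    letI S := (hPt.1.eigenvectorUnitary : Matrix (Fin n) (Fin n) ℝ) *
      diagonal ((↑) ∘ Real.sqrt ∘ hPt.1.eigenvalues) *
      (star hPt.1.eigenvectorUnitary : Matrix (Fin n) (Fin n) ℝ)
    IsUnit (R + Bᵀ * P * B) ∧ IsUnit Rt ∧ IsUnit (Rt + Bᵀ * (P - Pstar) * B) ∧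
    IsUnit ((1 : Matrix (Fin n) (Fin n) ℝ) + S * B * Rt⁻¹ * (Bᵀ * S)) ∧
    Pplus - Pstar
      = Abarᵀ * (P - Pstar) * Abar
        - Abarᵀ * (P - Pstar) * B * (Rt + Bᵀ * (P - Pstar) * B)⁻¹
          * (Bᵀ * (P - Pstar) * Abar) ∧
    Pplus - Pstar
      = Abarᵀ * S * ((1 : Matrix (Fin n) (Fin n) ℝ) + S * B * Rt⁻¹ * (Bᵀ * S))⁻¹
          * (S * Abar) := by
  set Rt := R + Bᵀ * Pstar * B
  set Abar := A - B * Rt⁻¹ * (Bᵀ * Pstar * A)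
  set Pplus := Q + Aᵀ * P * A - Aᵀ * P * B * (R + Bᵀ * P * B)⁻¹ * (Bᵀ * P * A)
  set S := (hPt.1.eigenvectorUnitary : Matrix (Fin n) (Fin n) ℝ) *
    diagonal ((↑) ∘ Real.sqrt ∘ hPt.1.eigenvalues) *
    (star hPt.1.eigenvectorUnitary : Matrix (Fin n) (Fin n) ℝ)
  have hP : P.PosSemidef := by simpa using hPt.add hPstar
  have hG : IsUnit (R + Bᵀ * P * B) :=
    (hR.add_posSemidef (hP.conjTranspose_mul_mul_same B)).isUnit
  have hRt : IsUnit Rt := (hR.add_posSemidef (hPstar.conjTranspose_mul_mul_same B)).isUnit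
  have hGsplit : Rt + Bᵀ * (P - Pstar) * B = R + Bᵀ * P * B := by
    simp only [Rt, Matrix.mul_sub, Matrix.sub_mul]
    abel
  have hSS : S * S = P - Pstar := by
    simp only [S, hPt.eigenvectorUnitary_mul_diagonal_sqrt_mul_star]
    exact CFC.sqrt_mul_sqrt_self _ hPt.nonneg
  have hGS : Rt + Bᵀ * S * (S * B) = R + Bᵀ * P * B := by
    rw [← hGsplit, ← hSS, Matrix.mul_assoc Bᵀ, Matrix.mul_assoc Bᵀ, Matrix.mul_assoc S]
  have hfirst : Pplus - Pstar = Abarᵀ * (P - Pstar) * Abar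
      - Abarᵀ * (P - Pstar) * B * (Rt + Bᵀ * (P - Pstar) * B)⁻¹ * (Bᵀ * (P - Pstar) * Abar) := by
    have h := riccatiUpdate_sub_riccatiUpdate (A := A) (Q := Q) (isHermitian_iff_isSymm.mp hR.1)
      (isHermitian_iff_isSymm.mp hP.1) (isHermitian_iff_isSymm.mp hPstar.1) hG hRt
    rwa [show riccatiUpdate A B Q R Pstar = Pstar from hARE.symm, riccatiGain,
      ← Matrix.mul_assoc, ← hGsplit] at h
  refine ⟨hG, hRt, hGsplit ▸ hG, isUnit_one_add_mul_inv_mul hRt (hGS ▸ hG), hfirst, ?_⟩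
  rw [one_add_mul_inv_mul_inv hRt (hGS ▸ hG), hfirst, ← hSS]
  simp only [Matrix.mul_sub, Matrix.sub_mul, Matrix.mul_one, Matrix.mul_assoc]

/-- Closed-form expression for the Riccati-update error
`P⁺ - P*` in terms of the closed-loop matrix `Ā` and the psd square root
of `P̃ = P - P*` (all indicated inverses exist). -/
theorem riccati_update_error_formula {n m : ℕ}
    (A : Matrix (Fin n) (Fin n) ℝ) (B : Matrix (Fin n) (Fin m) ℝ)
    (Q Pstar P : Matrix (Fin n) (Fin n) ℝ) (R : Matrix (Fin m) (Fin m) ℝ)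
    (hQ : Q.PosSemidef) (hR : R.PosDef) (hPstar : Pstar.PosSemidef)
    (hARE : Pstar = Q + Aᵀ * Pstar * A
      - Aᵀ * Pstar * B * (R + Bᵀ * Pstar * B)⁻¹ * (Bᵀ * Pstar * A))
    (hPsym : P.IsSymm) (hPt : (P - Pstar).PosSemidef) :
    letI Rt := R + Bᵀ * Pstar * B
    letI Abar := A - B * Rt⁻¹ * (Bᵀ * Pstar * A)
    letI Pplus := Q + Aᵀ * P * A - Aᵀ * P * B * (R + Bᵀ * P * B)⁻¹ * (Bᵀ * P * A)
    letI S := (hPt.1.eigenvectorUnitary : Matrix (Fin n) (Fin n) ℝ) *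
      diagonal ((↑) ∘ Real.sqrt ∘ hPt.1.eigenvalues) *
      (star hPt.1.eigenvectorUnitary : Matrix (Fin n) (Fin n) ℝ)
    IsUnit (R + Bᵀ * P * B) ∧ IsUnit Rt ∧ IsUnit (Rt + Bᵀ * (P - Pstar) * B) ∧
    IsUnit ((1 : Matrix (Fin n) (Fin n) ℝ) + S * B * Rt⁻¹ * (Bᵀ * S)) ∧
    Pplus - Pstar
      = Abarᵀ * (P - Pstar) * Abar
        - Abarᵀ * (P - Pstar) * B * (Rt + Bᵀ * (P - Pstar) * B)⁻¹
          * (Bᵀ * (P - Pstar) * Abar) ∧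
    Pplus - Pstar
      = Abarᵀ * S * ((1 : Matrix (Fin n) (Fin n) ℝ) + S * B * Rt⁻¹ * (Bᵀ * S))⁻¹
          * (S * Abar) :=
  riccati_update_error_formula_general A B Q Pstar P R hR hPstar hARE hPt
end

section
/- Let B be a real n×m matrix, R a symmetric positive definite m×m matrix, and P a symmetric positive semidefinite n×n matrix. Then the n×n matrix I + PBR⁻¹Bᵀ is invertible, and (I + PBR⁻¹Bᵀ)⁻¹ = I − PB(R + BᵀPB)⁻¹Bᵀ. -/
open Matrix Finset

namespace Matrix

variable {n m α : Type*} [Fintype n] [DecidableEq n] [Fintype m] [DecidableEq m] [CommRing α]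

theorem isUnit_add_mul_mul {A : Matrix n n α} {U : Matrix n m α} {C : Matrix m m α}
    {V : Matrix m n α} (hA : IsUnit A) (hC : IsUnit C) (hAC : IsUnit (C⁻¹ + V * A⁻¹ * U)) :
    IsUnit (A + U * C * V) := by
  obtain ⟨_⟩ := hA.nonempty_invertible
  obtain ⟨_⟩ := hC.nonempty_invertible
  obtain ⟨iAC⟩ := hAC.nonempty_invertible
  simp only [← invOf_eq_nonsing_inv] at iAC
  exact @isUnit_of_invertible _ _ _ (invertibleAddMulMul A U C V)

/-- The Woodbury identity with `A = 1`, written in terms of `R = C⁻¹`. -/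
theorem isUnit_one_add_mul_inv_mul_and_inv_eq {U : Matrix n m α} {R : Matrix m m α}
    {V : Matrix m n α} (hR : IsUnit R) (hRVU : IsUnit (R + V * U)) :
    IsUnit (1 + U * R⁻¹ * V) ∧ (1 + U * R⁻¹ * V)⁻¹ = 1 - U * (R + V * U)⁻¹ * V := by
  have hR' : R⁻¹⁻¹ = R := nonsing_inv_nonsing_inv R ((isUnit_iff_isUnit_det R).mp hR)
  have hRinv : IsUnit R⁻¹ := isUnit_nonsing_inv_iff.mpr hR
  have hRVU' : IsUnit (R⁻¹⁻¹ + V * (1 : Matrix n n α)⁻¹ * U) := by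
    rwa [hR', inv_one, Matrix.mul_one]
  refine ⟨isUnit_add_mul_mul isUnit_one hRinv hRVU', ?_⟩
  rw [add_mul_mul_inv_eq_sub _ _ _ _ isUnit_one hRinv hRVU', hR']
  simp only [inv_one, Matrix.mul_one, Matrix.one_mul]

end Matrix

/-- Matrix inversion lemma: for `R` pd and `P` psd,
`I + PBR⁻¹Bᵀ` is invertible with inverse `I - PB(R + BᵀPB)⁻¹Bᵀ`. -/
theorem matrix_inversion_lemma {n m : ℕ}
    (B : Matrix (Fin n) (Fin m) ℝ) (R : Matrix (Fin m) (Fin m) ℝ)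
    (P : Matrix (Fin n) (Fin n) ℝ) (hR : R.PosDef) (hP : P.PosSemidef) :
    IsUnit ((1 : Matrix (Fin n) (Fin n) ℝ) + P * B * R⁻¹ * Bᵀ) ∧
    ((1 : Matrix (Fin n) (Fin n) ℝ) + P * B * R⁻¹ * Bᵀ)⁻¹
      = (1 : Matrix (Fin n) (Fin n) ℝ) - P * B * (R + Bᵀ * P * B)⁻¹ * Bᵀ := by
  have hBPB : (Bᵀ * P * B).PosSemidef := by
    simpa only [conjTranspose_eq_transpose_of_trivial] using hP.conjTranspose_mul_mul_same B
  have hS : IsUnit (R + Bᵀ * (P * B)) := by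
    rw [← Matrix.mul_assoc]
    exact (hR.add_posSemidef hBPB).isUnit
  simpa only [Matrix.mul_assoc] using
    isUnit_one_add_mul_inv_mul_and_inv_eq (U := P * B) (V := Bᵀ) hR.isUnit hS
end

section
/- Let A be a real n×n matrix, B a real n×m matrix, Q a symmetric n×n matrix, R a symmetric positive definite m×m matrix, and let P, P̃ be symmetric positive semidefinite n×n matrices. Denote by P⁺ := Q + AᵀPA − AᵀPB(R + BᵀPB)⁻¹BᵀPA and P̃⁺ := Q + AᵀP̃A − AᵀP̃B(R + BᵀP̃B)⁻¹BᵀP̃A their Riccati updates, and let K := (R + BᵀPB)⁻¹BᵀPA. Then P⁺ − P̃⁺ = Aᵀ(I + P̃BR⁻¹Bᵀ)⁻¹(P − P̃)(A − BK). -/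
open Matrix Finset

/-! Writing `C(P) := P - PB(R + BᵀPB)⁻¹BᵀP` (`riccatiCore`), the Riccati update of `P` is
`Q + Aᵀ C(P) A`, and `C(P) A = P (A - BK)`. From `R⁻¹Bᵀ C(P) = (R + BᵀPB)⁻¹BᵀP` one gets
`(I + XBR⁻¹Bᵀ) C(P) = C(P) + XB(R + BᵀPB)⁻¹BᵀP` for every `X`; taking `X = P̃` for both `P` and `P̃`
gives `(I + P̃BR⁻¹Bᵀ)(C(P) - C(P̃)) A = (P - P̃)(A - BK)`. Finally `I + P̃BR⁻¹Bᵀ` is invertible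
because its determinant is that of `I + P̃^{1/2} BR⁻¹Bᵀ P̃^{1/2}`, which is positive definite. -/

namespace Matrix

variable {n m : Type*} [Fintype n] [Fintype m] [DecidableEq m]

section CommRing

variable {α : Type*} [CommRing α]

noncomputable def riccatiCore (R : Matrix m m α) (B : Matrix n m α) (P : Matrix n n α) :
    Matrix n n α :=
  P - P * B * (R + Bᵀ * P * B)⁻¹ * Bᵀ * P

theorem riccati_update_eq_add_riccatiCore (Q A P : Matrix n n α) (B : Matrix n m α)
    (R : Matrix m m α) :
    Q + Aᵀ * P * A - Aᵀ * P * B * (R + Bᵀ * P * B)⁻¹ * (Bᵀ * P * A) =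
      Q + Aᵀ * riccatiCore R B P * A := by
  simp only [riccatiCore, Matrix.mul_sub, Matrix.sub_mul, Matrix.mul_assoc]
  abel

theorem riccatiCore_mul (A P : Matrix n n α) (B : Matrix n m α) (R : Matrix m m α) :
    riccatiCore R B P * A = P * (A - B * ((R + Bᵀ * P * B)⁻¹ * (Bᵀ * P * A))) := by
  simp only [riccatiCore, Matrix.mul_sub, Matrix.sub_mul, Matrix.mul_assoc]

theorem inv_mul_transpose_mul_riccatiCore {R : Matrix m m α} {B : Matrix n m α}
    {P : Matrix n n α} (hR : IsUnit R.det) (hS : IsUnit (R + Bᵀ * P * B).det) :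
    R⁻¹ * (Bᵀ * riccatiCore R B P) = (R + Bᵀ * P * B)⁻¹ * (Bᵀ * P) := by
  have h : 1 - Bᵀ * P * B * (R + Bᵀ * P * B)⁻¹ = R * (R + Bᵀ * P * B)⁻¹ := by
    rw [sub_eq_iff_eq_add, ← Matrix.add_mul, mul_nonsing_inv _ hS]
  calc R⁻¹ * (Bᵀ * riccatiCore R B P)
      = R⁻¹ * ((1 - Bᵀ * P * B * (R + Bᵀ * P * B)⁻¹) * (Bᵀ * P)) := by
        simp only [riccatiCore, Matrix.mul_sub, Matrix.sub_mul, Matrix.mul_assoc, Matrix.one_mul]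
    _ = (R + Bᵀ * P * B)⁻¹ * (Bᵀ * P) := by
        rw [h, Matrix.mul_assoc, nonsing_inv_mul_cancel_left _ _ hR]

theorem one_add_mul_riccatiCore [DecidableEq n] {R : Matrix m m α} {B : Matrix n m α}
    {P : Matrix n n α} (hR : IsUnit R.det) (hS : IsUnit (R + Bᵀ * P * B).det)
    (X : Matrix n n α) :
    (1 + X * B * R⁻¹ * Bᵀ) * riccatiCore R B P =
      riccatiCore R B P + X * B * (R + Bᵀ * P * B)⁻¹ * Bᵀ * P := by
  rw [Matrix.add_mul, Matrix.one_mul, Matrix.mul_assoc, Matrix.mul_assoc, Matrix.mul_assoc,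
    inv_mul_transpose_mul_riccatiCore hR hS]
  simp only [Matrix.mul_assoc]

theorem one_add_mul_riccatiCore_self [DecidableEq n] {R : Matrix m m α} {B : Matrix n m α}
    {P : Matrix n n α} (hR : IsUnit R.det) (hS : IsUnit (R + Bᵀ * P * B).det) :
    (1 + P * B * R⁻¹ * Bᵀ) * riccatiCore R B P = P := by
  rw [one_add_mul_riccatiCore hR hS, riccatiCore, sub_add_cancel]

theorem riccatiCore_sub_riccatiCore_mul [DecidableEq n] {R : Matrix m m α} {B : Matrix n m α}
    {P Pt : Matrix n n α} (hR : IsUnit R.det) (hS : IsUnit (R + Bᵀ * P * B).det)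
    (hT : IsUnit (R + Bᵀ * Pt * B).det) (hM : IsUnit (1 + Pt * B * R⁻¹ * Bᵀ).det)
    (A : Matrix n n α) :
    (riccatiCore R B P - riccatiCore R B Pt) * A =
      (1 + Pt * B * R⁻¹ * Bᵀ)⁻¹ *
        ((P - Pt) * (A - B * ((R + Bᵀ * P * B)⁻¹ * (Bᵀ * P * A)))) := by
  have key : (1 + Pt * B * R⁻¹ * Bᵀ) * ((riccatiCore R B P - riccatiCore R B Pt) * A) =
      (P - Pt) * (A - B * ((R + Bᵀ * P * B)⁻¹ * (Bᵀ * P * A))) := by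
    rw [← Matrix.mul_assoc, Matrix.mul_sub, one_add_mul_riccatiCore hR hS,
      one_add_mul_riccatiCore_self hR hT, Matrix.sub_mul, Matrix.add_mul, riccatiCore_mul]
    simp only [Matrix.mul_sub, Matrix.sub_mul, Matrix.mul_assoc]
    abel
  rw [← key, nonsing_inv_mul_cancel_left _ _ hM]

end CommRing

open scoped MatrixOrder ComplexOrder in
theorem isUnit_one_add_mul_of_posSemidef {𝕜 : Type*} [RCLike 𝕜] [DecidableEq n]
    {P C : Matrix n n 𝕜} (hP : P.PosSemidef) (hC : C.PosSemidef) : IsUnit (1 + P * C) := by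
  obtain ⟨S, hS, rfl⟩ : ∃ S : Matrix n n 𝕜, S.PosSemidef ∧ S * S = P :=
    ⟨CFC.sqrt P, (CFC.sqrt_nonneg P).posSemidef, CFC.sqrt_mul_sqrt_self P hP.nonneg⟩
  rw [isUnit_iff_isUnit_det, Matrix.mul_assoc, det_one_add_mul_comm]
  have hSCS := hC.mul_mul_conjTranspose_same S
  rw [hS.isHermitian.eq] at hSCS
  exact (PosDef.one.add_posSemidef hSCS).isUnit.map detMonoidHom

theorem isUnit_det_add_transpose_mul_mul {R : Matrix m m ℝ} {P : Matrix n n ℝ} (hR : R.PosDef)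
    (hP : P.PosSemidef) (B : Matrix n m ℝ) :
    IsUnit (R + Bᵀ * P * B).det := by
  have hBPB := hP.conjTranspose_mul_mul_same B
  rw [conjTranspose_eq_transpose_of_trivial] at hBPB
  exact (hR.add_posSemidef hBPB).isUnit.map detMonoidHom

end Matrix

theorem riccati_update_difference_formula_general {n m : ℕ}
    (A : Matrix (Fin n) (Fin n) ℝ) (B : Matrix (Fin n) (Fin m) ℝ)
    (Q : Matrix (Fin n) (Fin n) ℝ) (R : Matrix (Fin m) (Fin m) ℝ)
    (P Pt : Matrix (Fin n) (Fin n) ℝ)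
    (hR : R.PosDef) (hP : P.PosSemidef) (hPt : Pt.PosSemidef) :
    letI Pplus := Q + Aᵀ * P * A - Aᵀ * P * B * (R + Bᵀ * P * B)⁻¹ * (Bᵀ * P * A)
    letI Ptplus := Q + Aᵀ * Pt * A - Aᵀ * Pt * B * (R + Bᵀ * Pt * B)⁻¹ * (Bᵀ * Pt * A)
    letI K := (R + Bᵀ * P * B)⁻¹ * (Bᵀ * P * A)
    Pplus - Ptplus
      = Aᵀ * ((1 : Matrix (Fin n) (Fin n) ℝ) + Pt * B * R⁻¹ * Bᵀ)⁻¹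
          * ((P - Pt) * (A - B * K)) := by
  have hBRB : (B * R⁻¹ * Bᵀ).PosSemidef := by
    simpa only [conjTranspose_eq_transpose_of_trivial] using
      hR.inv.posSemidef.mul_mul_conjTranspose_same B
  have hM : IsUnit (1 + Pt * B * R⁻¹ * Bᵀ).det := by
    simpa only [Matrix.mul_assoc, isUnit_iff_isUnit_det] using
      isUnit_one_add_mul_of_posSemidef hPt hBRB
  rw [riccati_update_eq_add_riccatiCore, riccati_update_eq_add_riccatiCore,
    add_sub_add_left_eq_sub, ← Matrix.sub_mul, ← Matrix.mul_sub, Matrix.mul_assoc Aᵀ,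
    riccatiCore_sub_riccatiCore_mul (hR.isUnit.map detMonoidHom)
      (isUnit_det_add_transpose_mul_mul hR hP B) (isUnit_det_add_transpose_mul_mul hR hPt B) hM,
    ← Matrix.mul_assoc]

/-- Difference of two Riccati updates:
`P⁺ - P̃⁺ = Aᵀ(I + P̃BR⁻¹Bᵀ)⁻¹(P - P̃)(A - BK)` where `K` is the Riccati gain of `P`. -/
theorem riccati_update_difference_formula {n m : ℕ}
    (A : Matrix (Fin n) (Fin n) ℝ) (B : Matrix (Fin n) (Fin m) ℝ)
    (Q : Matrix (Fin n) (Fin n) ℝ) (R : Matrix (Fin m) (Fin m) ℝ)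
    (P Pt : Matrix (Fin n) (Fin n) ℝ)
    (hQ : Q.IsSymm) (hR : R.PosDef) (hP : P.PosSemidef) (hPt : Pt.PosSemidef) :
    letI Pplus := Q + Aᵀ * P * A - Aᵀ * P * B * (R + Bᵀ * P * B)⁻¹ * (Bᵀ * P * A)
    letI Ptplus := Q + Aᵀ * Pt * A - Aᵀ * Pt * B * (R + Bᵀ * Pt * B)⁻¹ * (Bᵀ * Pt * A)
    letI K := (R + Bᵀ * P * B)⁻¹ * (Bᵀ * P * A)
    Pplus - Ptplus
      = Aᵀ * ((1 : Matrix (Fin n) (Fin n) ℝ) + Pt * B * R⁻¹ * Bᵀ)⁻¹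
          * ((P - Pt) * (A - B * K)) :=
  riccati_update_difference_formula_general A B Q R P Pt hR hP hPt
end

section
/- Let A be a real n×n matrix, B a real n×m matrix, W a symmetric positive definite n×n matrix, and let K*, K̃ be m×n matrices. Suppose ‖A − BK*‖_W < 1 and ‖K̃ − K*‖ · ‖B‖ · √(‖W‖·‖W⁻¹‖) < 1 − ‖A − BK*‖_W. Then ‖A − BK̃‖_W < 1, and consequently the spectral radius satisfies ρ(A − BK̃) < 1, i.e., K̃ is a stabilizing policy. (This is the precise form of the stability certificate: any policy sufficiently close to a policy whose closed loop contracts in the W-induced norm is itself stabilizing.) -/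
open Matrix Finset

/-!
Factor `W = Rᵀ R` with `R` invertible (e.g. `R = √W`). Then `‖M‖_W = ‖R M R⁻¹‖`, so the
`W`-induced norm is subadditive and bounded by `‖R‖ ‖M‖ ‖R⁻¹‖ = √(‖W‖ ‖W⁻¹‖) ‖M‖`. Splitting
`A - B K̃ = (A - B K*) + B (K* - K̃)` gives `‖A - B K̃‖_W < 1`. Finally `R M R⁻¹` has the spectrum
of `M`, and the complexification of a real matrix has the same norm bound (split a vector into
real and imaginary parts), so `ρ(A - B K̃) ≤ ‖R (A - B K̃) R⁻¹‖ = ‖A - B K̃‖_W < 1`.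
-/

open scoped Matrix.Norms.L2Operator

theorem ContinuousLinearMap.sSup_norm_div_norm_eq_norm {𝕜 E F : Type*} [NontriviallyNormedField 𝕜]
    [NormedAddCommGroup E] [NormedSpace 𝕜 E] [NormedAddCommGroup F] [NormedSpace 𝕜 F]
    (f : E →L[𝕜] F) : sSup {r | ∃ x, x ≠ 0 ∧ r = ‖f x‖ / ‖x‖} = ‖f‖ := by
  have hle : ∀ r ∈ {r | ∃ x, x ≠ 0 ∧ r = ‖f x‖ / ‖x‖}, r ≤ ‖f‖ := by
    rintro _ ⟨x, -, rfl⟩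
    exact div_le_of_le_mul₀ (norm_nonneg _) (norm_nonneg _) (f.le_opNorm x)
  refine le_antisymm (Real.sSup_le hle (norm_nonneg _)) ?_
  refine f.opNorm_le_bound (Real.sSup_nonneg fun _ ⟨x, _, hr⟩ => hr ▸ by positivity) fun x => ?_
  rcases eq_or_ne x 0 with rfl | hx
  · simp
  rw [← div_le_iff₀ (norm_pos_iff.mpr hx)]
  exact le_csSup ⟨_, hle⟩ ⟨x, hx, rfl⟩

theorem specNorm_eq_l2_opNorm {p q : ℕ} (M : Matrix (Fin p) (Fin q) ℝ) : specNorm M = ‖M‖ := rfl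

theorem Matrix.l2_opNorm_transpose {m n : Type*} [Fintype m] [Fintype n] [DecidableEq m]
    [DecidableEq n] (A : Matrix m n ℝ) : ‖Aᵀ‖ = ‖A‖ := by
  rw [← conjTranspose_eq_transpose_of_trivial, l2_opNorm_conjTranspose]

theorem Matrix.l2_opNorm_transpose_mul_self {m n : Type*} [Fintype m] [Fintype n] [DecidableEq n]
    (A : Matrix m n ℝ) : ‖Aᵀ * A‖ = ‖A‖ * ‖A‖ := by
  rw [← conjTranspose_eq_transpose_of_trivial, l2_opNorm_conjTranspose_mul_self]

theorem Matrix.l2_opNorm_mul_transpose_self {m n : Type*} [Fintype m] [Fintype n] [DecidableEq m]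
    [DecidableEq n] (A : Matrix m n ℝ) : ‖A * Aᵀ‖ = ‖A‖ * ‖A‖ := by
  simpa [l2_opNorm_transpose] using Aᵀ.l2_opNorm_transpose_mul_self

open scoped MatrixOrder in
theorem Matrix.PosDef.exists_isUnit_transpose_mul_self {n : Type*} [Fintype n] [DecidableEq n]
    {W : Matrix n n ℝ} (hW : W.PosDef) : ∃ R : Matrix n n ℝ, IsUnit R ∧ Rᵀ * R = W := by
  have hsq : CFC.sqrt W * CFC.sqrt W = W := CFC.sqrt_mul_sqrt_self W hW.posSemidef.nonneg
  have hsymm : (CFC.sqrt W)ᵀ = CFC.sqrt W := by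
    rw [← conjTranspose_eq_transpose_of_trivial]
    exact (CFC.sqrt_nonneg W).isSelfAdjoint
  exact ⟨CFC.sqrt W, isUnit_of_mul_isUnit_left (hsq ▸ hW.isUnit), by rw [hsymm, hsq]⟩

theorem EuclideanSpace.norm_sq_eq_re_add_im {n : Type*} [Fintype n] (v : EuclideanSpace ℂ n) :
    ‖v‖ ^ 2 =
      ‖WithLp.toLp 2 (fun i => (v i).re)‖ ^ 2 + ‖WithLp.toLp 2 (fun i => (v i).im)‖ ^ 2 := by
  rw [EuclideanSpace.norm_sq_eq, EuclideanSpace.norm_sq_eq, EuclideanSpace.norm_sq_eq,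
    ← Finset.sum_add_distrib]
  refine Finset.sum_congr rfl fun i _ => ?_
  rw [Complex.sq_norm, Complex.normSq_apply, Real.norm_eq_abs, Real.norm_eq_abs, sq_abs, sq_abs,
    sq, sq]

theorem Matrix.re_map_ofReal_mulVec {m n : Type*} [Fintype n] (N : Matrix m n ℝ) (v : n → ℂ)
    (i : m) : ((N.map (algebraMap ℝ ℂ) *ᵥ v) i).re = (N *ᵥ fun j => (v j).re) i := by
  simp [mulVec, dotProduct, Complex.re_sum]

theorem Matrix.im_map_ofReal_mulVec {m n : Type*} [Fintype n] (N : Matrix m n ℝ) (v : n → ℂ)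
    (i : m) : ((N.map (algebraMap ℝ ℂ) *ᵥ v) i).im = (N *ᵥ fun j => (v j).im) i := by
  simp [mulVec, dotProduct, Complex.im_sum]

theorem Matrix.l2_opNorm_map_ofReal_le {m n : Type*} [Fintype m] [Fintype n] [DecidableEq n]
    (N : Matrix m n ℝ) : ‖N.map (algebraMap ℝ ℂ)‖ ≤ ‖N‖ := by
  rw [l2_opNorm_def]
  refine ContinuousLinearMap.opNorm_le_bound _ (norm_nonneg _) fun v => ?_
  refine (pow_le_pow_iff_left₀ (norm_nonneg _) (by positivity) two_ne_zero).mp ?_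
  rw [mul_pow, EuclideanSpace.norm_sq_eq_re_add_im, EuclideanSpace.norm_sq_eq_re_add_im v]
  have hre : (fun i => ((toEuclideanLin.trans LinearMap.toContinuousLinearMap
      (N.map (algebraMap ℝ ℂ)) v) i).re) = N *ᵥ fun j => (v j).re :=
    funext (re_map_ofReal_mulVec N v.ofLp)
  have him : (fun i => ((toEuclideanLin.trans LinearMap.toContinuousLinearMap
      (N.map (algebraMap ℝ ℂ)) v) i).im) = N *ᵥ fun j => (v j).im :=
    funext (im_map_ofReal_mulVec N v.ofLp)
  rw [hre, him, mul_add, ← mul_pow, ← mul_pow]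
  gcongr
  · exact N.l2_opNorm_mulVec (WithLp.toLp 2 fun i => (v i).re)
  · exact N.l2_opNorm_mulVec (WithLp.toLp 2 fun i => (v i).im)

theorem specRad_le_l2_opNorm {p : ℕ} (N : Matrix (Fin p) (Fin p) ℝ) : specRad N ≤ ‖N‖ := by
  refine Real.sSup_le ?_ (norm_nonneg _)
  rintro _ ⟨μ, hμ, rfl⟩
  -- the zero ring is not a `NormOneClass`
  rcases isEmpty_or_nonempty (Fin p) with hp | hp
  · simp [spectrum.of_subsingleton] at hμ
  exact (spectrum.norm_le_norm_of_mem hμ).trans N.l2_opNorm_map_ofReal_le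

theorem specRad_conj {p : ℕ} {S : Matrix (Fin p) (Fin p) ℝ} (hS : IsUnit S)
    (M : Matrix (Fin p) (Fin p) ℝ) : specRad (S * M * S⁻¹) = specRad M := by
  obtain ⟨u, rfl⟩ := hS
  let uℂ := Units.map (algebraMap ℝ ℂ).mapMatrix.toMonoidHom u
  have h : (u.val * M * u⁻¹.val).map (algebraMap ℝ ℂ) =
      uℂ.val * M.map (algebraMap ℝ ℂ) * uℂ⁻¹.val := by
    rw [← RingHom.mapMatrix_apply, map_mul, map_mul]; rfl
  unfold specRad
  rw [← Matrix.coe_units_inv, h, spectrum.units_conjugate]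

theorem Matrix.dotProduct_transpose_mul_self_mulVec {m n : Type*} [Fintype m] [Fintype n]
    (R : Matrix m n ℝ) (z : n → ℝ) :
    z ⬝ᵥ (Rᵀ * R) *ᵥ z = ‖WithLp.toLp 2 (R *ᵥ z)‖ ^ 2 := by
  rw [← mulVec_mulVec, dotProduct_mulVec, vecMul_transpose, EuclideanSpace.real_norm_sq_eq]
  simp [dotProduct, sq]

theorem sqrt_quotient_transpose_mul_self_eq_norm_div_norm {p : ℕ}
    {R : Matrix (Fin p) (Fin p) ℝ} (hR : IsUnit R) (M : Matrix (Fin p) (Fin p) ℝ) (z : Fin p → ℝ) :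
    √((z ⬝ᵥ (Mᵀ * (Rᵀ * R) * M) *ᵥ z) / (z ⬝ᵥ (Rᵀ * R) *ᵥ z)) =
      ‖WithLp.toLp 2 ((R * M * R⁻¹) *ᵥ (R *ᵥ z))‖ / ‖WithLp.toLp 2 (R *ᵥ z)‖ := by
  have hRM : Mᵀ * (Rᵀ * R) * M = (R * M)ᵀ * (R * M) := by
    simp only [transpose_mul, Matrix.mul_assoc]
  rw [hRM, dotProduct_transpose_mul_self_mulVec, dotProduct_transpose_mul_self_mulVec,
    Real.sqrt_div (sq_nonneg _), Real.sqrt_sq (norm_nonneg _), Real.sqrt_sq (norm_nonneg _),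
    mulVec_mulVec, Matrix.mul_assoc _ R⁻¹,
    Matrix.nonsing_inv_mul _ ((isUnit_iff_isUnit_det R).mp hR), Matrix.mul_one]

theorem winducedNorm_transpose_mul_self {p : ℕ} {R : Matrix (Fin p) (Fin p) ℝ} (hR : IsUnit R)
    (M : Matrix (Fin p) (Fin p) ℝ) : winducedNorm (Rᵀ * R) M = ‖R * M * R⁻¹‖ := by
  have hRinv (w : Fin p → ℝ) : R *ᵥ (R⁻¹ *ᵥ w) = w := by
    rw [mulVec_mulVec, mul_nonsing_inv _ ((isUnit_iff_isUnit_det R).mp hR), one_mulVec]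
  rw [l2_opNorm_def, ← ContinuousLinearMap.sSup_norm_div_norm_eq_norm]
  unfold winducedNorm
  congr 1
  ext r
  constructor
  · rintro ⟨z, hz, rfl⟩
    refine ⟨WithLp.toLp 2 (R *ᵥ z), ?_,
      sqrt_quotient_transpose_mul_self_eq_norm_div_norm hR M z⟩
    simpa using (mulVec_injective_iff_isUnit.mpr hR).ne hz
  · rintro ⟨x, hx, rfl⟩
    refine ⟨R⁻¹ *ᵥ x.ofLp, fun h => hx ?_, ?_⟩
    · simpa [h, eq_comm] using hRinv x.ofLp
    · rw [sqrt_quotient_transpose_mul_self_eq_norm_div_norm hR M, hRinv]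
      rfl

section WInducedNorm

variable {p : ℕ} {W : Matrix (Fin p) (Fin p) ℝ}

theorem winducedNorm_add_le (hW : W.PosDef) (M E : Matrix (Fin p) (Fin p) ℝ) :
    winducedNorm W (M + E) ≤ winducedNorm W M + winducedNorm W E := by
  obtain ⟨R, hR, rfl⟩ := hW.exists_isUnit_transpose_mul_self
  simp only [winducedNorm_transpose_mul_self hR, Matrix.mul_add, Matrix.add_mul]
  exact norm_add_le _ _

theorem winducedNorm_le (hW : W.PosDef) (M : Matrix (Fin p) (Fin p) ℝ) :
    winducedNorm W M ≤ √(‖W‖ * ‖W⁻¹‖) * ‖M‖ := by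
  obtain ⟨R, hR, rfl⟩ := hW.exists_isUnit_transpose_mul_self
  have hnorm : ‖R‖ = √‖Rᵀ * R‖ := by
    rw [l2_opNorm_transpose_mul_self, Real.sqrt_mul_self (norm_nonneg _)]
  have hnorm_inv : ‖R⁻¹‖ = √‖(Rᵀ * R)⁻¹‖ := by
    rw [Matrix.mul_inv_rev, ← transpose_nonsing_inv, l2_opNorm_mul_transpose_self,
      Real.sqrt_mul_self (norm_nonneg _)]
  rw [winducedNorm_transpose_mul_self hR, Real.sqrt_mul (norm_nonneg _), ← hnorm, ← hnorm_inv]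
  calc ‖R * M * R⁻¹‖ ≤ ‖R‖ * ‖M‖ * ‖R⁻¹‖ :=
        (norm_mul_le _ _).trans (mul_le_mul_of_nonneg_right (norm_mul_le _ _) (norm_nonneg _))
    _ = ‖R‖ * ‖R⁻¹‖ * ‖M‖ := by ring

theorem specRad_le_winducedNorm (hW : W.PosDef) (M : Matrix (Fin p) (Fin p) ℝ) :
    specRad M ≤ winducedNorm W M := by
  obtain ⟨R, hR, rfl⟩ := hW.exists_isUnit_transpose_mul_self
  rw [winducedNorm_transpose_mul_self hR, ← specRad_conj hR M]
  exact specRad_le_l2_opNorm _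

end WInducedNorm

theorem stability_certificate_near_optimality_general {n m : ℕ}
    (A : Matrix (Fin n) (Fin n) ℝ) (B : Matrix (Fin n) (Fin m) ℝ)
    (W : Matrix (Fin n) (Fin n) ℝ) (hW : W.PosDef)
    (Kstar Kt : Matrix (Fin m) (Fin n) ℝ)
    (hclose : specNorm (Kt - Kstar) * specNorm B
        * Real.sqrt (specNorm W * specNorm W⁻¹)
      < 1 - winducedNorm W (A - B * Kstar)) :
    winducedNorm W (A - B * Kt) < 1 ∧ specRad (A - B * Kt) < 1 := by
  have hsplit : A - B * Kt = (A - B * Kstar) + B * (Kstar - Kt) := by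
    rw [Matrix.mul_sub]; abel
  have hperturb : winducedNorm W (B * (Kstar - Kt)) ≤
      specNorm (Kt - Kstar) * specNorm B * √(specNorm W * specNorm W⁻¹) := by
    simp only [specNorm_eq_l2_opNorm]
    calc winducedNorm W (B * (Kstar - Kt)) ≤ √(‖W‖ * ‖W⁻¹‖) * ‖B * (Kstar - Kt)‖ :=
          winducedNorm_le hW _
      _ ≤ √(‖W‖ * ‖W⁻¹‖) * (‖B‖ * ‖Kt - Kstar‖) := by
          rw [norm_sub_rev]; gcongr; exact l2_opNorm_mul _ _
      _ = ‖Kt - Kstar‖ * ‖B‖ * √(‖W‖ * ‖W⁻¹‖) := by ring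
  have hcontract : winducedNorm W (A - B * Kt) < 1 := by
    rw [hsplit]
    linarith [winducedNorm_add_le hW (A - B * Kstar) (B * (Kstar - Kt))]
  exact ⟨hcontract, (specRad_le_winducedNorm hW _).trans_lt hcontract⟩

/-- Stability certificate from near-optimality: if the closed
loop of `K*` contracts in the `W`-induced norm and `K̃` is sufficiently close to
`K*`, then the closed loop of `K̃` also contracts in the `W`-induced norm, hence
`K̃` is stabilizing. -/
theorem stability_certificate_near_optimality {n m : ℕ}
    (A : Matrix (Fin n) (Fin n) ℝ) (B : Matrix (Fin n) (Fin m) ℝ)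
    (W : Matrix (Fin n) (Fin n) ℝ) (hW : W.PosDef)
    (Kstar Kt : Matrix (Fin m) (Fin n) ℝ)
    (hKstar : winducedNorm W (A - B * Kstar) < 1)
    (hclose : specNorm (Kt - Kstar) * specNorm B
        * Real.sqrt (specNorm W * specNorm W⁻¹)
      < 1 - winducedNorm W (A - B * Kstar)) :
    winducedNorm W (A - B * Kt) < 1 ∧ specRad (A - B * Kt) < 1 :=
  stability_certificate_near_optimality_general A B W hW Kstar Kt hclose
end
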